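/- Let X ⊂ ℝⁿ be convex and let O be an ε-approximate projection oracle for X (i.e., O(y) ∈ X and ‖y − O(y)‖² ≤ min_{x'∈X} ‖y − x'‖² + ε). Then for any x ∈ X and y ∈ ℝⁿ, ‖y − x‖² ≥ (1 − √ε)·‖O(y) − x‖² − √ε. -/

import Mathlib

/-!
Write `z = O(y)`. For `t ∈ (0, 1]` the point `t x + (1 - t) z` lies in `X`, and comparing the
oracle's guarantee against it yields the approximate variational inequality
`2⟪y - z, x - z⟫ ≤ t‖x - z‖² + ε / t`. Expanding `‖y - x‖²` around `z` then gives
`‖y - x‖² ≥ (1 - t)‖z - x‖² - ε / t`, trivially true for `t > 1`; `t = √ε` balances the errors.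
-/

open RealInnerProductSpace

section ApproxProjection

variable {E : Type*} [NormedAddCommGroup E] [InnerProductSpace ℝ E] {s : Set E} {x y z : E}
  {ε : ℝ}

theorem two_inner_le_of_sq_norm_sub_le_add (hs : Convex ℝ s) (hx : x ∈ s) (hz : z ∈ s)
    (happrox : ∀ x' ∈ s, ‖y - z‖ ^ 2 ≤ ‖y - x'‖ ^ 2 + ε) {t : ℝ} (ht0 : 0 < t) (ht1 : t ≤ 1) :
    2 * ⟪y - z, x - z⟫ ≤ t * ‖x - z‖ ^ 2 + ε / t := by
  have hmem : t • x + (1 - t) • z ∈ s := hs hx hz ht0.le (by linarith) (by ring)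
  have hexpand : ‖y - (t • x + (1 - t) • z)‖ ^ 2
      = ‖y - z‖ ^ 2 - 2 * t * ⟪y - z, x - z⟫ + t ^ 2 * ‖x - z‖ ^ 2 := by
    rw [show y - (t • x + (1 - t) • z) = (y - z) - t • (x - z) by module, norm_sub_sq_real,
      real_inner_smul_right, norm_smul, Real.norm_of_nonneg ht0.le]
    ring
  have hstep : t * (2 * ⟪y - z, x - z⟫) ≤ t * (t * ‖x - z‖ ^ 2 + ε / t) := by
    have := happrox _ hmem
    rw [mul_add, mul_div_cancel₀ _ ht0.ne']
    nlinarith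
  exact le_of_mul_le_mul_left hstep ht0

theorem sq_norm_sub_ge_of_sq_norm_sub_le_add (hs : Convex ℝ s) (hx : x ∈ s) (hz : z ∈ s)
    (happrox : ∀ x' ∈ s, ‖y - z‖ ^ 2 ≤ ‖y - x'‖ ^ 2 + ε) (hε : 0 ≤ ε) {t : ℝ} (ht0 : 0 < t) :
    (1 - t) * ‖z - x‖ ^ 2 - ε / t ≤ ‖y - x‖ ^ 2 := by
  rcases le_or_gt t 1 with ht1 | ht1
  · have hinner := two_inner_le_of_sq_norm_sub_le_add hs hx hz happrox ht0 ht1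
    have hpyth : ‖y - x‖ ^ 2 = ‖y - z‖ ^ 2 - 2 * ⟪y - z, x - z⟫ + ‖x - z‖ ^ 2 := by
      rw [show y - x = (y - z) - (x - z) by abel, norm_sub_sq_real]
    rw [hpyth, norm_sub_rev z x]
    nlinarith [sq_nonneg ‖y - z‖]
  · have : 0 ≤ ε / t := div_nonneg hε ht0.le
    nlinarith [sq_nonneg ‖z - x‖, sq_nonneg ‖y - x‖]

end ApproxProjection

theorem approx_projection_pythagorean (n : ℕ) (Xs : Set (EuclideanSpace ℝ (Fin n)))
    (hconv : Convex ℝ Xs) (ε : ℝ) (hε : 0 < ε)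
    (O : EuclideanSpace ℝ (Fin n) → EuclideanSpace ℝ (Fin n))
    (hmem : ∀ y, O y ∈ Xs)
    (happrox : ∀ y, ∀ x' ∈ Xs, ‖y - O y‖ ^ 2 ≤ ‖y - x'‖ ^ 2 + ε) :
    ∀ x ∈ Xs, ∀ y,
      (1 - Real.sqrt ε) * ‖O y - x‖ ^ 2 - Real.sqrt ε ≤ ‖y - x‖ ^ 2 := by
  intro x hx y
  have h := sq_norm_sub_ge_of_sq_norm_sub_le_add hconv hx (hmem y) (happrox y) hε.le
    (Real.sqrt_pos.2 hε)
  rwa [Real.div_sqrt] at h
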